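/- In misère Partizan Kayles, no position is a Left-win: for every position G (a finite multiset of strips), the misère outcome of G is not L (i.e., it is not the case that Left wins regardless of who moves first). -/

import Mathlib

/-- Add a strip of length `k` to a position (strips of length 0 are discarded). -/
def addStrip (m : Multiset ℕ) (k : ℕ) : Multiset ℕ := if k = 0 then m else k ::ₘ m

/-- Left removes one square from a strip of length `n ≥ 1`, leaving strips `i` and `n-1-i`. -/
def LeftMove (G G' : Multiset ℕ) : Prop :=
  ∃ n ∈ G, ∃ i, i + 1 ≤ n ∧ G' = addStrip (addStrip (G.erase n) i) (n - 1 - i)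

/-- Right removes two adjacent squares from a strip of length `n ≥ 2`, leaving `i` and `n-2-i`. -/
def RightMove (G G' : Multiset ℕ) : Prop :=
  ∃ n ∈ G, ∃ i, i + 2 ≤ n ∧ G' = addStrip (addStrip (G.erase n) i) (n - 2 - i)

mutual
  /-- Misère play: Left, to move, wins (a player unable to move wins). -/
  inductive LeftWinsMover : Multiset ℕ → Prop
    | cannot (G : Multiset ℕ) : (¬ ∃ G', LeftMove G G') → LeftWinsMover G
    | move (G G' : Multiset ℕ) : LeftMove G G' → LeftWinsWaiter G' → LeftWinsMover G
  /-- Misère play: Left wins with Right to move. -/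
  inductive LeftWinsWaiter : Multiset ℕ → Prop
    | intro (G : Multiset ℕ) : (∃ G', RightMove G G') →
        (∀ G', RightMove G G' → LeftWinsMover G') → LeftWinsWaiter G
end

inductive Outcome | L | N | P | R
  deriving DecidableEq

open Classical in
/-- The misère outcome `o⁻(G)`. -/
noncomputable def outcome (G : Multiset ℕ) : Outcome :=
  if LeftWinsMover G then (if LeftWinsWaiter G then Outcome.L else Outcome.N)
  else (if LeftWinsWaiter G then Outcome.P else Outcome.R)

/-- The partial order on outcomes: `L` greatest, `R` least, `N` and `P` incomparable. -/
def Outcome.le (a b : Outcome) : Prop := a = b ∨ a = Outcome.R ∨ b = Outcome.L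

/-- `pos k j` is the position `kS₁ + jS₂`. -/
def pos (k j : ℕ) : Multiset ℕ := Multiset.replicate k 1 + Multiset.replicate j 2

/-!
A Left move removes one square and a Right move removes two. If Left wins moving first, either
she has no move (so there are no squares) or she moves to a position she wins moving second; if
she wins moving second, Right has some move, into a position she wins moving first. Hence the
number of squares is `0 mod 3` in the first case and `2 mod 3` in the second, so the two cannot
hold together.
-/

lemma sum_addStrip (m : Multiset ℕ) (k : ℕ) : (addStrip m k).sum = m.sum + k := by
  unfold addStrip
  split <;> simp_all [add_comm]

lemma sum_addStrip_addStrip_erase {G : Multiset ℕ} {n : ℕ} (hn : n ∈ G) (i j : ℕ) :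
    (addStrip (addStrip (G.erase n) i) j).sum + n = G.sum + i + j := by
  rw [sum_addStrip, sum_addStrip, ← Multiset.sum_erase hn]
  ring

lemma LeftMove.sum_add_one {G G' : Multiset ℕ} (h : LeftMove G G') : G'.sum + 1 = G.sum := by
  obtain ⟨n, hn, i, hi, rfl⟩ := h
  have := sum_addStrip_addStrip_erase hn i (n - 1 - i)
  omega

lemma RightMove.sum_add_two {G G' : Multiset ℕ} (h : RightMove G G') : G'.sum + 2 = G.sum := by
  obtain ⟨n, hn, i, hi, rfl⟩ := h
  have := sum_addStrip_addStrip_erase hn i (n - 2 - i)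
  omega

lemma sum_eq_zero_of_not_leftMove {G : Multiset ℕ} (h : ¬ ∃ G', LeftMove G G') : G.sum = 0 :=
  Multiset.sum_eq_zero fun n hn => by
    by_contra hne
    exact h ⟨_, n, hn, 0, by omega, rfl⟩

mutual
theorem LeftWinsMover.sum_mod_three {G : Multiset ℕ} : LeftWinsMover G → G.sum % 3 = 0
  | .cannot _ h => by rw [sum_eq_zero_of_not_leftMove h]
  | .move _ _ hm hw => by
      have := hm.sum_add_one
      have := hw.sum_mod_three
      omega

theorem LeftWinsWaiter.sum_mod_three {G : Multiset ℕ} : LeftWinsWaiter G → G.sum % 3 = 2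
  | .intro _ ⟨G', hr⟩ hwin => by
      have := hr.sum_add_two
      have := (hwin G' hr).sum_mod_three
      omega
end

theorem kayles_no_left_win (G : Multiset ℕ) (hG : 0 ∉ G) :
    outcome G ≠ Outcome.L := by
  intro h
  unfold outcome at h
  split_ifs at h with hMover hWaiter
  have := hMover.sum_mod_three
  have := hWaiter.sum_mod_three
  omega
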